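/- Every x ∈ 𝒳 satisfies |x(t + h) − x(t)| ≤ √2·ω(h) for all h ∈ (0,1) and t ∈ [0, 1 − h]. In particular, every x ∈ 𝒳 is Hölder continuous with exponent 1/2. -/

import Mathlib

/-!
The `m`-th level `∑ₖ θ m k * e m k` of the Faber–Schauder series is `2^(-m/2)` times a sum of
hats of height `1/2` and width `2^(-m)` with disjoint supports, so it is `2^(m/2)`-Lipschitz and
bounded by `2^(-m/2) · dist(2^m t, ℤ)` (note `e00 (Int.fract y) = dist(y, ℤ)`). Split the
increment at level `N = ν h`: the levels `m < N` contribute at most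
`h ∑_{m<N} 2^(m/2) ≤ (√2 + 1) 2^(N/2) h`, and the levels `m ≥ N` at most
`2 · 2^(-N/2) · sup_y ∑_j 2^(-j/2) dist(2^j y, ℤ) ≤ 2 · 2^(-N/2) (2 + √2) / 3`, a Takagi-type
bound. Since `2^(-N-1) < h ≤ 2^(-N)`, both terms are `O(√h)`.
-/

noncomputable def e00 (t : ℝ) : ℝ := max (min t (1 - t)) 0

noncomputable def e (m : ℕ) (k : ℤ) (t : ℝ) : ℝ :=
  (2 : ℝ) ^ (-(m : ℝ) / 2) * e00 ((2 : ℝ) ^ m * t - k)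

def mathcalX : Set (ℝ → ℝ) :=
  {x | ∃ θ : ℕ → ℕ → ℝ, (∀ m k, θ m k = 1 ∨ θ m k = -1) ∧
    ∀ t, x t = ∑' m : ℕ, ∑ k ∈ Finset.range (2 ^ m), θ m k * e m k t}

noncomputable def ν (h : ℝ) : ℤ := ⌊-Real.logb 2 h⌋

noncomputable def ω (h : ℝ) : ℝ :=
  (1 + 1 / Real.sqrt 2) * h * (2 : ℝ) ^ ((ν h : ℝ) / 2)
    + (1 / 3) * (2 * Real.sqrt 2 + 2) * (2 : ℝ) ^ (-(ν h : ℝ) / 2)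

open Finset Real

lemma e00_nonneg (x : ℝ) : 0 ≤ e00 x := le_max_right _ _

lemma e00_le_self {x : ℝ} (hx : 0 ≤ x) : e00 x ≤ x :=
  max_le (min_le_left _ _) hx

lemma e00_le_one_sub {x : ℝ} (hx : x ≤ 1) : e00 x ≤ 1 - x :=
  max_le (min_le_right _ _) (by linarith)

lemma e00_le_half (x : ℝ) : e00 x ≤ 1 / 2 := by
  refine max_le ?_ (by norm_num)
  rcases le_total x (1 / 2) with h | h
  · exact (min_le_left _ _).trans h
  · exact (min_le_right _ _).trans (by linarith)

lemma e00_eq_zero_of_nonpos {x : ℝ} (hx : x ≤ 0) : e00 x = 0 :=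
  max_eq_right ((min_le_left _ _).trans hx)

lemma e00_eq_zero_of_one_le {x : ℝ} (hx : 1 ≤ x) : e00 x = 0 :=
  max_eq_right ((min_le_right _ _).trans (by linarith))

lemma abs_e00_sub_e00_le (a b : ℝ) : |e00 a - e00 b| ≤ |a - b| :=
  calc |e00 a - e00 b| ≤ |min a (1 - a) - min b (1 - b)| := abs_max_sub_max_le_abs _ _ _
    _ ≤ max |a - b| |(1 - a) - (1 - b)| := abs_min_sub_min_le_max _ _ _ _
    _ = |a - b| := by rw [show (1 - a) - (1 - b) = -(a - b) by ring, abs_neg, max_self]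

lemma e00_sub_intCast_eq_zero {s : ℝ} {k : ℤ} (hk : k ≠ ⌊s⌋) : e00 (s - k) = 0 := by
  rcases hk.lt_or_gt with hlt | hgt
  · apply e00_eq_zero_of_one_le
    have : (k : ℝ) + 1 ≤ ⌊s⌋ := by exact_mod_cast hlt
    linarith [Int.floor_le s]
  · apply e00_eq_zero_of_nonpos
    have : (⌊s⌋ : ℝ) + 1 ≤ k := by exact_mod_cast hgt
    linarith [Int.lt_floor_add_one s]

lemma e00_sub_intCast_le_e00_fract (s : ℝ) (k : ℤ) : e00 (s - k) ≤ e00 (Int.fract s) := by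
  by_cases hk : k = ⌊s⌋
  · rw [hk, Int.self_sub_floor]
  · rw [e00_sub_intCast_eq_zero hk]
    exact e00_nonneg _

lemma abs_mul_e00_sub_le {a : ℝ} (ha : |a| ≤ 1) (s : ℝ) (k : ℤ) :
    |a * e00 (s - k)| ≤ e00 (Int.fract s) := by
  rw [abs_mul, abs_of_nonneg (e00_nonneg _)]
  exact (mul_le_of_le_one_left (e00_nonneg _) ha).trans (e00_sub_intCast_le_e00_fract s k)

lemma abs_sum_le_of_eq_zero_of_ne {ι : Type*} [DecidableEq ι] (s : Finset ι) {f : ι → ℝ}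
    {c : ℝ} (j : ι) (hf : ∀ k ≠ j, f k = 0) (hj : |f j| ≤ c) (hc : 0 ≤ c) :
    |∑ k ∈ s, f k| ≤ c := by
  have hsingle : ∀ k, f k = if j = k then f j else 0 := fun k => by
    split_ifs with h
    · rw [h]
    · exact hf k (Ne.symm h)
  rw [Finset.sum_congr rfl fun k _ => hsingle k, Finset.sum_ite_eq]
  split_ifs
  exacts [hj, by simpa using hc]

noncomputable def hatSum (c : ℕ → ℝ) (n : ℕ) (s : ℝ) : ℝ :=
  ∑ k ∈ range n, c k * e00 (s - k)

section hatSum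

variable {c : ℕ → ℝ} (n : ℕ)

-- On `[j, j + 1)` only the hat `e00 (· - j)` is active.
lemma abs_hatSum_le (hc : ∀ k, |c k| ≤ 1) (s : ℝ) : |hatSum c n s| ≤ e00 (Int.fract s) := by
  refine abs_sum_le_of_eq_zero_of_ne _ ⌊s⌋.toNat (fun k hk => ?_) ?_ (e00_nonneg _)
  · rw [← Int.cast_natCast, e00_sub_intCast_eq_zero (by omega), mul_zero]
  · exact_mod_cast abs_mul_e00_sub_le (hc _) s _

lemma abs_hatSum_sub_le (hc : ∀ k, |c k| ≤ 1) {s s' : ℝ} (hss' : s ≤ s') :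
    |hatSum c n s' - hatSum c n s| ≤ s' - s := by
  rcases (Int.floor_le_floor hss').eq_or_lt with hfl | hlt
  · rw [hatSum, hatSum, ← Finset.sum_sub_distrib]
    refine abs_sum_le_of_eq_zero_of_ne _ ⌊s⌋.toNat (fun k hk => ?_) ?_ (by linarith)
    · have hk' : (k : ℤ) ≠ ⌊s⌋ := by omega
      rw [← Int.cast_natCast, e00_sub_intCast_eq_zero hk', e00_sub_intCast_eq_zero (hfl ▸ hk'),
        sub_self]
    · rw [← mul_sub, abs_mul]
      calc |c _| * |e00 (s' - _) - e00 (s - _)| ≤ 1 * |s' - s| := by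
            refine mul_le_mul (hc _) ?_ (abs_nonneg _) zero_le_one
            simpa using abs_e00_sub_e00_le (s' - ⌊s⌋.toNat) (s - ⌊s⌋.toNat)
        _ = s' - s := by rw [one_mul, abs_of_nonneg (by linarith)]
  · -- Different hats are active at `s` and `s'`; each is bounded by the distance to an endpoint.
    have hfloor : (⌊s⌋ : ℝ) + 1 ≤ ⌊s'⌋ := by exact_mod_cast hlt
    have hs' : e00 (Int.fract s') ≤ s' - ⌊s'⌋ := e00_le_self (Int.fract_nonneg _)
    have hs : e00 (Int.fract s) ≤ 1 - (s - ⌊s⌋) := e00_le_one_sub (Int.fract_lt_one _).le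
    linarith [abs_sub (hatSum c n s') (hatSum c n s), abs_hatSum_le n hc s', abs_hatSum_le n hc s]

end hatSum

lemma e00_fract_two_mul_le (y : ℝ) : e00 (Int.fract (2 * y)) ≤ 1 - 2 * e00 (Int.fract y) := by
  set z := Int.fract y
  have hz0 : 0 ≤ z := Int.fract_nonneg y
  have hz1 : z < 1 := Int.fract_lt_one y
  have h2y : Int.fract (2 * y) = Int.fract (2 * z) := by
    rw [← Int.fract_add_intCast (2 * z) (2 * ⌊y⌋)]
    congr 1
    push_cast
    linarith [Int.floor_add_fract y]
  rw [h2y]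
  rcases lt_or_ge z (1 / 2) with hz | hz
  · rw [Int.fract_eq_self.mpr ⟨by linarith, by linarith⟩]
    linarith [e00_le_one_sub (x := 2 * z) (by linarith), e00_le_self hz0]
  · rw [← Int.fract_sub_one, Int.fract_eq_self.mpr ⟨by linarith, by linarith⟩]
    linarith [e00_le_self (x := 2 * z - 1) (by linarith), e00_le_one_sub hz1.le]

-- `1 / (3 (1 - q))` is the fixed point of `M ↦ q M + 1 / 3`; the correction term strengthens the
-- statement enough for the induction (peel off `j = 0`, replace `y` by `2 y`) to close.
lemma sum_pow_mul_e00_fract_le {q : ℝ} (hq : 1 / 2 ≤ q) (hq1 : q < 1) (n : ℕ) (y : ℝ) :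
    ∑ j ∈ range n, q ^ j * e00 (Int.fract (2 ^ j * y))
      ≤ 1 / (3 * (1 - q)) - max (1 / 3 - e00 (Int.fract y)) 0 := by
  have hM : q * (1 / (3 * (1 - q))) = 1 / (3 * (1 - q)) - 1 / 3 := by
    field_simp [(by linarith : 1 - q ≠ 0)]
    ring
  have hM3 : 1 / 3 ≤ 1 / (3 * (1 - q)) := by
    rw [div_le_div_iff₀ (by norm_num) (by linarith)]
    linarith
  induction n generalizing y with
  | zero =>
    have := e00_nonneg (Int.fract y)
    simp only [range_zero, sum_empty, sub_nonneg, max_le_iff]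
    constructor <;> linarith
  | succ n ih =>
    have hshift : ∀ j : ℕ, q ^ (j + 1) * e00 (Int.fract (2 ^ (j + 1) * y))
        = q * (q ^ j * e00 (Int.fract (2 ^ j * (2 * y)))) := fun j => by ring_nf
    rw [sum_range_succ', Finset.sum_congr rfl fun j _ => hshift j, ← mul_sum]
    have hstep := mul_le_mul_of_nonneg_left (ih (2 * y)) (by linarith : 0 ≤ q)
    have hdouble := e00_fract_two_mul_le y
    rw [mul_sub, hM] at hstep
    simp only [pow_zero, one_mul]
    have hmax_ge := le_max_left (1 / 3 - e00 (Int.fract (2 * y))) 0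
    have hmax_nonneg := le_max_right (1 / 3 - e00 (Int.fract (2 * y))) 0
    rcases le_or_gt (e00 (Int.fract y)) (1 / 3) with hu | hu
    · rw [max_eq_left (by linarith)]
      nlinarith
    · rw [max_eq_right (by linarith)]
      nlinarith

lemma two_rpow_div_two (m : ℕ) : (2 : ℝ) ^ ((m : ℝ) / 2) = √2 ^ m := by
  rw [div_eq_inv_mul, Real.rpow_mul zero_le_two, Real.rpow_natCast, ← one_div,
    ← Real.sqrt_eq_rpow]

lemma two_rpow_neg_div_two (m : ℕ) : (2 : ℝ) ^ (-(m : ℝ) / 2) = (√2)⁻¹ ^ m := by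
  rw [neg_div, Real.rpow_neg zero_le_two, two_rpow_div_two, inv_pow]

noncomputable def faberLevel (θ : ℕ → ℕ → ℝ) (m : ℕ) (t : ℝ) : ℝ :=
  ∑ k ∈ range (2 ^ m), θ m k * e m k t

section faberLevel

variable {θ : ℕ → ℕ → ℝ} (m : ℕ)

lemma faberLevel_eq_hatSum (t : ℝ) :
    faberLevel θ m t = (√2)⁻¹ ^ m * hatSum (θ m) (2 ^ m) (2 ^ m * t) := by
  simp only [faberLevel, hatSum, e, two_rpow_neg_div_two, mul_sum, Int.cast_natCast]
  exact Finset.sum_congr rfl fun k _ => by ring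

lemma abs_faberLevel_le (hθ : ∀ m k, |θ m k| ≤ 1) (t : ℝ) :
    |faberLevel θ m t| ≤ (√2)⁻¹ ^ m * e00 (Int.fract (2 ^ m * t)) := by
  rw [faberLevel_eq_hatSum, abs_mul, abs_of_nonneg (by positivity)]
  exact mul_le_mul_of_nonneg_left (abs_hatSum_le _ (hθ m) _) (by positivity)

lemma abs_faberLevel_add_sub_le (hθ : ∀ m k, |θ m k| ≤ 1) (t : ℝ) {h : ℝ} (hh : 0 ≤ h) :
    |faberLevel θ m (t + h) - faberLevel θ m t| ≤ √2 ^ m * h := by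
  rw [faberLevel_eq_hatSum, faberLevel_eq_hatSum, ← mul_sub, abs_mul,
    abs_of_nonneg (by positivity)]
  have hle : 2 ^ m * t ≤ 2 ^ m * (t + h) := by gcongr; linarith
  calc (√2)⁻¹ ^ m * |hatSum (θ m) (2 ^ m) (2 ^ m * (t + h)) - hatSum (θ m) (2 ^ m) (2 ^ m * t)|
      ≤ (√2)⁻¹ ^ m * (2 ^ m * (t + h) - 2 ^ m * t) :=
        mul_le_mul_of_nonneg_left (abs_hatSum_sub_le _ (hθ m) hle) (by positivity)
    _ = ((√2)⁻¹ * 2) ^ m * h := by ring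
    _ = √2 ^ m * h := by
        rw [inv_mul_eq_div, Real.div_sqrt]

lemma abs_faberLevel_le_half (hθ : ∀ m k, |θ m k| ≤ 1) (t : ℝ) :
    |faberLevel θ m t| ≤ (√2)⁻¹ ^ m / 2 := by
  have := mul_le_mul_of_nonneg_left (e00_le_half (Int.fract (2 ^ m * t)))
    (by positivity : 0 ≤ (√2)⁻¹ ^ m)
  linarith [abs_faberLevel_le m hθ t]

end faberLevel

lemma one_div_three_mul_one_sub_inv_sqrt_two : 1 / (3 * (1 - (√2)⁻¹)) = (2 + √2) / 3 := by
  have h2 : √2 ^ 2 = 2 := Real.sq_sqrt zero_le_two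
  have h1 : 1 < √2 := Real.one_lt_sqrt_two
  field_simp
  rw [div_eq_iff (by nlinarith)]
  nlinarith

lemma inv_sqrt_two_mem_Ico : (√2)⁻¹ ∈ Set.Ico (1 / 2 : ℝ) 1 := by
  have h1 : 1 < √2 := Real.one_lt_sqrt_two
  have h2 : √2 < 2 := by
    rw [Real.sqrt_lt' two_pos]
    norm_num
  refine ⟨?_, inv_lt_one_of_one_lt₀ h1⟩
  rw [one_div]
  exact inv_anti₀ (by positivity) h2.le

lemma geom_sum_sqrt_two_le (N : ℕ) : ∑ m ∈ range N, √2 ^ m ≤ (√2 + 1) * √2 ^ N := by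
  have h1 : 1 < √2 := Real.one_lt_sqrt_two
  have h2 : √2 ^ 2 = 2 := Real.sq_sqrt zero_le_two
  rw [geom_sum_eq h1.ne', div_le_iff₀ (by linarith)]
  nlinarith [pow_nonneg (zero_le_one.trans h1.le) N]

lemma summable_faberLevel {θ : ℕ → ℕ → ℝ} (hθ : ∀ m k, |θ m k| ≤ 1) (t : ℝ) :
    Summable fun m => faberLevel θ m t :=
  .of_norm_bounded ((summable_geometric_of_lt_one (by positivity)
    inv_sqrt_two_mem_Ico.2).div_const 2) fun m => abs_faberLevel_le_half m hθ t

lemma sum_range_abs_faberLevel_add_le {θ : ℕ → ℕ → ℝ} (hθ : ∀ m k, |θ m k| ≤ 1) (N n : ℕ)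
    (y : ℝ) :
    ∑ j ∈ range n, |faberLevel θ (j + N) y| ≤ (√2)⁻¹ ^ N * ((2 + √2) / 3) := by
  obtain ⟨hq, hq1⟩ := inv_sqrt_two_mem_Ico
  calc ∑ j ∈ range n, |faberLevel θ (j + N) y|
      ≤ ∑ j ∈ range n, (√2)⁻¹ ^ N * ((√2)⁻¹ ^ j * e00 (Int.fract (2 ^ j * (2 ^ N * y)))) := by
        refine Finset.sum_le_sum fun j _ => (abs_faberLevel_le _ hθ y).trans_eq ?_
        ring_nf
    _ = (√2)⁻¹ ^ N * ∑ j ∈ range n, (√2)⁻¹ ^ j * e00 (Int.fract (2 ^ j * (2 ^ N * y))) := by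
        rw [mul_sum]
    _ ≤ (√2)⁻¹ ^ N * ((2 + √2) / 3) := by
        refine mul_le_mul_of_nonneg_left ?_ (by positivity)
        rw [← one_div_three_mul_one_sub_inv_sqrt_two]
        exact (sum_pow_mul_e00_fract_le hq hq1 n _).trans (sub_le_self _ (le_max_right _ _))

lemma abs_sub_le_of_mem_mathcalX {x : ℝ → ℝ} (hx : x ∈ mathcalX) (N : ℕ) (t : ℝ) {h : ℝ}
    (hh : 0 ≤ h) :
    |x (t + h) - x t| ≤ (√2 + 1) * √2 ^ N * h + 2 * ((√2)⁻¹ ^ N * ((2 + √2) / 3)) := by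
  obtain ⟨θ, hθ_sign, hx⟩ := hx
  have hθ : ∀ m k, |θ m k| ≤ 1 := fun m k => by rcases hθ_sign m k with h | h <;> simp [h]
  set d := fun m => faberLevel θ m (t + h) - faberLevel θ m t
  have hdiff : x (t + h) - x t = ∑' m, d m := by
    rw [hx, hx]
    exact ((summable_faberLevel hθ _).tsum_sub (summable_faberLevel hθ _)).symm
  have hd : Summable fun m => |d m| := by
    refine .of_norm_bounded (summable_geometric_of_lt_one (by positivity)
      inv_sqrt_two_mem_Ico.2) fun m => ?_
    rw [Real.norm_eq_abs, abs_abs]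
    linarith [abs_sub (faberLevel θ m (t + h)) (faberLevel θ m t),
      abs_faberLevel_le_half m hθ (t + h), abs_faberLevel_le_half m hθ t]
  have hhead : ∑ m ∈ range N, |d m| ≤ (√2 + 1) * √2 ^ N * h :=
    calc ∑ m ∈ range N, |d m| ≤ ∑ m ∈ range N, √2 ^ m * h :=
          Finset.sum_le_sum fun m _ => abs_faberLevel_add_sub_le m hθ t hh
      _ ≤ (√2 + 1) * √2 ^ N * h := by
          rw [← sum_mul]
          exact mul_le_mul_of_nonneg_right (geom_sum_sqrt_two_le N) hh
  have htail : ∑' j, |d (j + N)| ≤ 2 * ((√2)⁻¹ ^ N * ((2 + √2) / 3)) := by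
    refine Real.tsum_le_of_sum_range_le (fun _ => abs_nonneg _) fun n => ?_
    calc ∑ j ∈ range n, |d (j + N)|
        ≤ ∑ j ∈ range n, (|faberLevel θ (j + N) (t + h)| + |faberLevel θ (j + N) t|) :=
          Finset.sum_le_sum fun j _ => abs_sub _ _
      _ ≤ 2 * ((√2)⁻¹ ^ N * ((2 + √2) / 3)) := by
          rw [sum_add_distrib, two_mul]
          exact add_le_add (sum_range_abs_faberLevel_add_le hθ N n _)
            (sum_range_abs_faberLevel_add_le hθ N n _)
  calc |x (t + h) - x t| = |∑' m, d m| := by rw [hdiff]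
    _ ≤ ∑' m, |d m| := norm_tsum_le_tsum_norm (f := d) hd
    _ = ∑ m ∈ range N, |d m| + ∑' j, |d (j + N)| := (hd.sum_add_tsum_nat_add N).symm
    _ ≤ _ := add_le_add hhead htail

lemma ν_nonneg {h : ℝ} (hh0 : 0 < h) (hh1 : h ≤ 1) : 0 ≤ ν h :=
  Int.floor_nonneg.mpr (neg_nonneg.mpr (Real.logb_nonpos one_lt_two hh0.le hh1))

lemma sqrt_two_mul_ω {h : ℝ} {N : ℕ} (hN : ν h = N) :
    √2 * ω h = (√2 + 1) * √2 ^ N * h + 2 * ((√2)⁻¹ ^ N * ((2 + √2) / 3)) := by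
  have h2 : √2 ^ 2 = 2 := Real.sq_sqrt zero_le_two
  have hN' : (ν h : ℝ) = N := by exact_mod_cast hN
  rw [ω, hN', two_rpow_div_two, two_rpow_neg_div_two, inv_pow]
  field_simp
  linear_combination 2 * h2

-- Balance the two terms by taking `2 ^ N ≤ 1 / h < 2 ^ (N + 1)`.
lemma exists_bound_le_mul_sqrt {h : ℝ} (hh0 : 0 < h) (hh1 : h ≤ 1) :
    ∃ N : ℕ, (√2 + 1) * √2 ^ N * h + 2 * ((√2)⁻¹ ^ N * ((2 + √2) / 3))
      ≤ ((√2 + 1) + 2 * √2 * ((2 + √2) / 3)) * √h := by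
  obtain ⟨N, hlow, hhigh⟩ := exists_nat_pow_near (one_le_one_div hh0 hh1) one_lt_two
  rw [le_div_iff₀ hh0] at hlow
  rw [div_lt_iff₀ hh0, pow_succ] at hhigh
  have hsq : ∀ n : ℕ, √2 ^ n * √2 ^ n = 2 ^ n := fun n => by
    rw [← mul_pow, Real.mul_self_sqrt zero_le_two]
  have hfine : √2 ^ N * h ≤ √h := by
    rw [Real.le_sqrt (by positivity) hh0.le]
    calc (√2 ^ N * h) ^ 2 = 2 ^ N * h * h := by rw [← hsq]; ring
      _ ≤ 1 * h := mul_le_mul_of_nonneg_right hlow hh0.le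
      _ = h := one_mul h
  have hcoarse : (√2)⁻¹ ^ N ≤ √2 * √h := by
    rw [← Real.sqrt_mul zero_le_two, Real.le_sqrt (by positivity) (by positivity), inv_pow,
      sq, ← mul_inv, hsq, inv_le_iff_one_le_mul₀ (by positivity)]
    linarith
  refine ⟨N, ?_⟩
  calc (√2 + 1) * √2 ^ N * h + 2 * ((√2)⁻¹ ^ N * ((2 + √2) / 3))
      ≤ (√2 + 1) * √h + 2 * (√2 * √h * ((2 + √2) / 3)) := by
        rw [mul_assoc]
        gcongr
    _ = ((√2 + 1) + 2 * √2 * ((2 + √2) / 3)) * √h := by ring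

lemma abs_sub_le_mul_sqrt_of_mem_mathcalX {x : ℝ → ℝ} (hx : x ∈ mathcalX) {a b : ℝ}
    (hab : a ≤ b) (hba : b - a ≤ 1) :
    |x b - x a| ≤ ((√2 + 1) + 2 * √2 * ((2 + √2) / 3)) * √(b - a) := by
  rcases hab.eq_or_lt with rfl | hlt
  · simp
  obtain ⟨N, hN⟩ := exists_bound_le_mul_sqrt (sub_pos.mpr hlt) hba
  simpa using (abs_sub_le_of_mem_mathcalX hx N a (sub_pos.mpr hlt).le).trans hN

theorem stmt_13 :
    (∀ x ∈ mathcalX, ∀ h ∈ Set.Ioo (0 : ℝ) 1, ∀ t ∈ Set.Icc (0 : ℝ) (1 - h),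
      |x (t + h) - x t| ≤ Real.sqrt 2 * ω h) ∧
    (∀ x ∈ mathcalX, ∃ C : ℝ, ∀ s ∈ Set.Icc (0 : ℝ) 1, ∀ t ∈ Set.Icc (0 : ℝ) 1,
      |x t - x s| ≤ C * |t - s| ^ ((1 : ℝ) / 2)) := by
  constructor
  · rintro x hx h ⟨hh0, hh1⟩ t -
    lift ν h to ℕ using ν_nonneg hh0 hh1.le with N hN
    rw [sqrt_two_mul_ω hN.symm]
    exact abs_sub_le_of_mem_mathcalX hx N t hh0.le
  · intro x hx
    refine ⟨(√2 + 1) + 2 * √2 * ((2 + √2) / 3), fun s ⟨hs0, hs1⟩ t ⟨ht0, ht1⟩ => ?_⟩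
    rw [← Real.sqrt_eq_rpow]
    rcases le_total s t with hst | hts
    · rw [abs_of_nonneg (sub_nonneg.mpr hst)]
      exact abs_sub_le_mul_sqrt_of_mem_mathcalX hx hst (by linarith)
    · rw [abs_sub_comm, abs_sub_comm t, abs_of_nonneg (sub_nonneg.mpr hts)]
      exact abs_sub_le_mul_sqrt_of_mem_mathcalX hx hts (by linarith)
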